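/- For every n ≥ 2, every connected graph G of order n satisfies 1 ≤ β(G) ≤ n−1, with β(G) = 1 if and only if G is a path, and β(G) = n−1 if and only if G is complete. -/

import Mathlib

/-!
A vertex is at distance `0` only from itself, so in a connected graph a set containing all
vertices but one is resolving, while the empty set is not (`n ≥ 2`). In the complete graph two
vertices outside `W` have the same distance `1` to every vertex of `W`, so `β(Kₙ) = n - 1`;
a connected graph that is not complete contains an induced path `x - a - b`, and `b` separates
`x` from `a`, so all vertices but `x` and `a` form a resolving set.

A single vertex `w` resolves `G` exactly when `v ↦ d(w, v)` is injective. Distances in a connected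
graph of order `n` are `< n`, so this map is then a bijection onto `{0, …, n - 1}`; adjacent
vertices have distances differing by at most `1`, hence by exactly `1`, and conversely a vertex
at distance `k + 1` has a neighbour at distance `k`, which injectivity pins down. So `G` is the
path listed by distance from `w`.
-/

open SimpleGraph

/-- `W` is a resolving set for `G`: vertices with equal distance vectors to `W` are equal. -/
def IsResolvingSet {V : Type*} (G : SimpleGraph V) (W : Set V) : Prop :=
  ∀ u v : V, (∀ w ∈ W, G.dist w u = G.dist w v) → u = v

/-- The metric dimension of `G`: the least cardinality of a resolving set. -/
noncomputable def metricDim {V : Type*} [Fintype V] (G : SimpleGraph V) : ℕ :=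
  sInf {n | ∃ W : Finset V, W.card = n ∧ IsResolvingSet G ↑W}

/-- The threshold dimension of `G`: the least metric dimension over spanning supergraphs. -/
noncomputable def thresholdDim {V : Type*} [Fintype V] (G : SimpleGraph V) : ℕ :=
  sInf {n | ∃ H : SimpleGraph V, G ≤ H ∧ metricDim H = n}

/-- The strong product of `k` copies of the path on `{0, …, n-1}`. -/
def strongPow (n k : ℕ) : SimpleGraph (Fin k → Fin n) where
  Adj x y := x ≠ y ∧ ∀ i, ((x i : ℤ) - (y i : ℤ)).natAbs ≤ 1
  symm := by
    constructor
    rintro x y ⟨h1, h2⟩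
    refine ⟨fun h => h1 h.symm, fun i => ?_⟩
    rw [show (y i : ℤ) - (x i : ℤ) = -((x i : ℤ) - (y i : ℤ)) by ring, Int.natAbs_neg]
    exact h2 i
  loopless := ⟨fun x ⟨h, _⟩ => h rfl⟩

namespace SimpleGraph

variable {V V' : Type*} {G : SimpleGraph V}

lemma Adj.dist_le_dist_add_one {a b : V} (h : G.Adj a b) (w : V) :
    G.dist w b ≤ G.dist w a + 1 := by
  have := h.diff_dist_adj (u := w)
  omega

lemma Walk.le_add_length_of_adj_le_add_one {f : V → ℕ}
    (hf : ∀ ⦃a b⦄, G.Adj a b → f b ≤ f a + 1) {u v : V} (p : G.Walk u v) :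
    f v ≤ f u + p.length := by
  induction p with
  | nil => simp
  | cons h _ ih =>
    have := hf h
    rw [Walk.length_cons]
    omega

lemma Connected.dist_lt_card [Fintype V] (hG : G.Connected) (u v : V) :
    G.dist u v < Fintype.card V := by
  obtain ⟨p, hp, hlen⟩ := hG.exists_path_of_dist u v
  exact hlen ▸ hp.length_lt

lemma exists_adj_dist_eq_of_dist_eq_add_one {w u : V} {k : ℕ} (h : G.dist w u = k + 1) :
    ∃ y, G.Adj y u ∧ G.dist w y = k := by
  have hwu : G.Reachable w u := Reachable.of_dist_ne_zero (by omega)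
  obtain ⟨p, hp⟩ := hwu.exists_walk_length_eq_dist
  have hne : u ≠ w := by rintro rfl; simp at h
  obtain ⟨y, hyu, q, hq⟩ := Walk.exists_eq_cons_of_ne hne p.reverse
  have hq_len : q.length = k := by
    have := congrArg Walk.length hq
    simp only [Walk.length_reverse, Walk.length_cons] at this
    omega
  have hle : G.dist w y ≤ k := dist_comm (G := G) ▸ hq_len ▸ dist_le q
  have hge : k + 1 ≤ G.dist w y + 1 := h ▸ hyu.symm.dist_le_dist_add_one w
  exact ⟨y, hyu.symm, by omega⟩

lemma adj_of_dist_eq_add_one {w u v : V} (hw : Function.Injective (G.dist w))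
    (h : G.dist w v = G.dist w u + 1) : G.Adj u v := by
  obtain ⟨y, hyv, hy⟩ := exists_adj_dist_eq_of_dist_eq_add_one h
  exact hw hy ▸ hyv

lemma Connected.nonempty_iso_pathGraph_of_injective_dist [Fintype V]
    (hG : G.Connected) {w : V} (hw : Function.Injective (G.dist w)) :
    Nonempty (G ≃g pathGraph (Fintype.card V)) := by
  let f : V → Fin (Fintype.card V) := fun v => ⟨G.dist w v, hG.dist_lt_card w v⟩
  have hf : Function.Bijective f := by
    refine (Fintype.bijective_iff_injective_and_card f).mpr ⟨fun u v huv => ?_, by simp⟩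
    exact hw (congrArg Fin.val huv)
  refine ⟨⟨Equiv.ofBijective f hf, fun {u v} => ?_⟩⟩
  simp only [Equiv.ofBijective_apply, pathGraph_adj, f]
  constructor
  · rintro (h | h)
    · exact adj_of_dist_eq_add_one hw h.symm
    · exact (adj_of_dist_eq_add_one hw h.symm).symm
  · intro huv
    have := huv.dist_le_dist_add_one w
    have := huv.symm.dist_le_dist_add_one w
    have := hw.ne huv.ne
    omega

lemma Hom.dist_le {G' : SimpleGraph V'} (f : G →g G') {u v : V} (h : G.Reachable u v) :
    G'.dist (f u) (f v) ≤ G.dist u v := by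
  obtain ⟨p, hp⟩ := h.exists_walk_length_eq_dist
  exact hp ▸ (Walk.length_map f p) ▸ SimpleGraph.dist_le (p.map f)

lemma Iso.dist_eq {G' : SimpleGraph V'} (e : G ≃g G') (u v : V) :
    G'.dist (e u) (e v) = G.dist u v := by
  by_cases h : G.Reachable u v
  · refine le_antisymm (e.toHom.dist_le h) ?_
    simpa using e.symm.toHom.dist_le ((Iso.reachable_iff (φ := e)).mpr h)
  · rw [dist_eq_zero_of_not_reachable h,
      dist_eq_zero_of_not_reachable ((Iso.reachable_iff (φ := e)).not.mpr h)]

lemma pathGraph_dist_zero {n : ℕ} [NeZero n] (v : Fin n) : (pathGraph n).dist 0 v = v := by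
  obtain ⟨m, rfl⟩ := Nat.exists_eq_succ_of_ne_zero (NeZero.ne n)
  refine le_antisymm ?_ ?_
  · induction v using Fin.induction with
    | zero => simp
    | succ i ih =>
      have hadj : (pathGraph (m + 1)).Adj i.castSucc i.succ := by simp [pathGraph_adj]
      simpa using (hadj.dist_le_dist_add_one 0).trans (by simpa using ih)
  · obtain ⟨p, hp⟩ := (pathGraph_connected m).exists_walk_length_eq_dist 0 v
    have := p.le_add_length_of_adj_le_add_one (f := Fin.val)
      (fun a b hab => by rw [pathGraph_adj] at hab; omega)
    simpa [hp] using this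

lemma injective_dist_of_iso_pathGraph {n : ℕ} [NeZero n] (e : G ≃g pathGraph n) :
    Function.Injective (G.dist (e.symm 0)) := by
  intro u v h
  rw [← e.dist_eq, ← e.dist_eq, RelIso.apply_symm_apply, pathGraph_dist_zero,
    pathGraph_dist_zero] at h
  exact e.injective (Fin.ext h)

end SimpleGraph

section MetricDimension

variable {V : Type*} {G : SimpleGraph V}

lemma isResolvingSet_singleton_iff {w : V} :
    IsResolvingSet G {w} ↔ Function.Injective (G.dist w) := by
  simp [IsResolvingSet, Function.Injective]

lemma SimpleGraph.Connected.isResolvingSet_of_compl (hG : G.Connected) {W : Set V}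
    (h : ∀ u ∉ W, ∀ v ∉ W, (∀ w ∈ W, G.dist w u = G.dist w v) → u = v) :
    IsResolvingSet G W := by
  intro u v huv
  by_cases hu : u ∈ W
  · exact hG.dist_eq_zero_iff.mp (by simpa using (huv u hu).symm)
  by_cases hv : v ∈ W
  · exact (hG.dist_eq_zero_iff.mp (by simpa using huv v hv)).symm
  exact h u hu v hv huv

lemma SimpleGraph.Connected.isResolvingSet_compl_singleton (hG : G.Connected) (x : V) :
    IsResolvingSet G {x}ᶜ :=
  hG.isResolvingSet_of_compl fun u hu v hv _ => by simp_all

variable [Fintype V]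

lemma IsResolvingSet.metricDim_le {W : Finset V} (h : IsResolvingSet G W) :
    metricDim G ≤ W.card :=
  Nat.sInf_le ⟨W, rfl, h⟩

lemma SimpleGraph.Connected.exists_isResolvingSet_card_eq_metricDim (hG : G.Connected) :
    ∃ W : Finset V, W.card = metricDim G ∧ IsResolvingSet G W :=
  Nat.sInf_mem (s := {n | ∃ W : Finset V, W.card = n ∧ IsResolvingSet G W})
    ⟨_, Finset.univ, rfl, by simpa using hG.isResolvingSet_of_compl (W := Set.univ) (by simp)⟩

lemma SimpleGraph.Connected.metricDim_pos [Nontrivial V] (hG : G.Connected) : 0 < metricDim G := by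
  obtain ⟨W, hW, hres⟩ := hG.exists_isResolvingSet_card_eq_metricDim
  refine Nat.pos_of_ne_zero fun h0 => ?_
  rw [← hW, Finset.card_eq_zero] at h0
  obtain ⟨u, v, huv⟩ := exists_pair_ne V
  exact huv (hres u v (by simp [h0]))

lemma SimpleGraph.Connected.metricDim_le_card_sub_one (hG : G.Connected) :
    metricDim G ≤ Fintype.card V - 1 := by
  classical
  obtain ⟨x⟩ := hG.nonempty
  simpa [Finset.card_compl] using
    IsResolvingSet.metricDim_le (W := {x}ᶜ) (by simpa using hG.isResolvingSet_compl_singleton x)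

lemma SimpleGraph.Connected.metricDim_le_card_sub_two (hG : G.Connected) (hne : G ≠ ⊤) :
    metricDim G ≤ Fintype.card V - 2 := by
  classical
  obtain ⟨u, v, huv, hnadj⟩ : ∃ u v, u ≠ v ∧ ¬ G.Adj u v := by
    by_contra! h
    exact hne (SimpleGraph.ext (funext₂ fun u v => propext ⟨Adj.ne, h u v⟩))
  obtain ⟨p, -, hp⟩ := hG.exists_path_of_dist u v
  obtain ⟨x, a, b, hxa, hab, hxb, hxb_ne⟩ :=
    p.exists_adj_adj_not_adj_ne hp (hG.one_lt_dist_of_ne_of_not_adj huv hnadj)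
  have hres : IsResolvingSet G ↑({x, a}ᶜ : Finset V) := by
    refine hG.isResolvingSet_of_compl fun y hy z hz hyz => ?_
    have hb := hyz b (by simp [hxb_ne.symm, hab.ne'])
    have hba : G.dist b a = 1 := dist_eq_one_iff_adj.mpr hab.symm
    have hbx : G.dist b x ≠ 1 := fun h => hxb (dist_eq_one_iff_adj.mp h).symm
    simp only [Finset.coe_compl, Set.mem_compl_iff, Finset.coe_insert, Finset.coe_singleton,
      Set.mem_insert_iff, Set.mem_singleton_iff, not_not] at hy hz
    rcases hy with rfl | rfl <;> rcases hz with rfl | rfl <;> first | rfl | omega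
  have := hres.metricDim_le
  rwa [Finset.card_compl, Finset.card_pair hxa.ne] at this

lemma card_sub_one_le_of_isResolvingSet_top {W : Finset V}
    (h : IsResolvingSet (⊤ : SimpleGraph V) W) : Fintype.card V - 1 ≤ W.card := by
  classical
  by_contra! hlt
  obtain ⟨u, hu, v, hv, huv⟩ := Finset.one_lt_card.mp (by rw [Finset.card_compl]; omega :
    1 < Wᶜ.card)
  refine huv (h u v fun w hw => ?_)
  rw [dist_top_of_ne (by rintro rfl; simp_all), dist_top_of_ne (by rintro rfl; simp_all)]

lemma metricDim_top [Nonempty V] :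
    metricDim (⊤ : SimpleGraph V) = Fintype.card V - 1 := by
  obtain ⟨W, hW, hres⟩ := (connected_top (V := V)).exists_isResolvingSet_card_eq_metricDim
  exact le_antisymm connected_top.metricDim_le_card_sub_one
    (hW ▸ card_sub_one_le_of_isResolvingSet_top hres)

lemma SimpleGraph.Connected.metricDim_eq_one_iff [Nontrivial V] (hG : G.Connected) :
    metricDim G = 1 ↔ ∃ w, Function.Injective (G.dist w) := by
  constructor
  · intro h
    obtain ⟨W, hW, hres⟩ := hG.exists_isResolvingSet_card_eq_metricDim
    obtain ⟨w, rfl⟩ := Finset.card_eq_one.mp (hW.trans h)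
    exact ⟨w, isResolvingSet_singleton_iff.mp (by simpa using hres)⟩
  · rintro ⟨w, hw⟩
    have hres : IsResolvingSet G ↑({w} : Finset V) := by
      simpa using isResolvingSet_singleton_iff.mpr hw
    exact le_antisymm (by simpa using hres.metricDim_le) hG.metricDim_pos

end MetricDimension

/-- For a connected graph of order `n ≥ 2`: `1 ≤ β(G) ≤ n - 1`, with `β(G) = 1` iff `G`
is a path and `β(G) = n - 1` iff `G` is complete. -/
theorem metricDim_bounds {V : Type*} [Fintype V] (G : SimpleGraph V)
    (n : ℕ) (hn : 2 ≤ n) (hcard : Fintype.card V = n) (hG : G.Connected) :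
    1 ≤ metricDim G ∧ metricDim G ≤ n - 1 ∧
      (metricDim G = 1 ↔ Nonempty (G ≃g pathGraph n)) ∧
      (metricDim G = n - 1 ↔ G = ⊤) := by
  subst hcard
  have : Nontrivial V := Fintype.one_lt_card_iff_nontrivial.mp hn
  have : NeZero (Fintype.card V) := ⟨Fintype.card_ne_zero⟩
  refine ⟨hG.metricDim_pos, hG.metricDim_le_card_sub_one, ?_, ?_⟩
  · rw [hG.metricDim_eq_one_iff]
    exact ⟨fun ⟨_, hw⟩ => hG.nonempty_iso_pathGraph_of_injective_dist hw,
      fun ⟨e⟩ => ⟨_, injective_dist_of_iso_pathGraph e⟩⟩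
  · refine ⟨fun h => ?_, fun h => h ▸ metricDim_top⟩
    by_contra hne
    have := hG.metricDim_le_card_sub_two hne
    omega
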